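/- The tensor A of order 4 and dimension 2 with a_{1111} = 1, a_{1112} = -1, a_{2111} = 1 and all other entries zero satisfies A x^4 = x_1^4 ≥ 0 for all x (so A is positive semi-definite) and A is a column adequate tensor. -/

import Mathlib

/-!
Summing the sign-reversal conditions `xᵢ (A x³)ᵢ ≤ 0` gives `A x⁴ = x₁⁴ ≤ 0`, hence `x₁ = 0`,
and both components `x₁² (x₁ - x₂)` and `x₁³` of `A x³` vanish.
-/

open Finset Matrix

/-- For a tensor `A` of order `k+1` and dimension `n`, `tmul A x i = (A x^k)_i`. -/
def tmul {n k : ℕ} (A : Fin n → (Fin k → Fin n) → ℝ) (x : Fin n → ℝ) (i : Fin n) : ℝ :=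
  ∑ f : Fin k → Fin n, A i f * ∏ j, x (f j)

/-- A tensor is column adequate if `x_i (A x^{m-1})_i ≤ 0` for all `i` implies `A x^{m-1} = 0`. -/
def ColumnAdequate {n k : ℕ} (A : Fin n → (Fin k → Fin n) → ℝ) : Prop :=
  ∀ x : Fin n → ℝ, (∀ i, x i * tmul A x i ≤ 0) → ∀ i, tmul A x i = 0

/-- A tensor is row diagonal if `a_{i i2...im}` can be nonzero only when `i2 = ... = im`. -/
def RowDiagonal {n k : ℕ} (A : Fin n → (Fin k → Fin n) → ℝ) : Prop :=
  ∀ i f, A i f ≠ 0 → ∀ j j' : Fin k, f j = f j'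

/-- The majorization matrix of a tensor: `M(A)_{ij} = a_{ijj...j}`. -/
def majorization {n k : ℕ} (A : Fin n → (Fin k → Fin n) → ℝ) : Matrix (Fin n) (Fin n) ℝ :=
  fun i j => A i (fun _ => j)

/-- A square matrix `M` (over any finite index type) is column adequate if
`z_i (Mz)_i ≤ 0` for all `i` implies `Mz = 0`. -/
def MatrixColumnAdequate {ι : Type*} [Fintype ι] (M : Matrix ι ι ℝ) : Prop :=
  ∀ z : ι → ℝ, (∀ i, z i * M.mulVec z i ≤ 0) → M.mulVec z = 0

/-- The order-4 dimension-2 tensor with `a_{1111} = 1`, `a_{1112} = -1`, `a_{2111} = 1`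
and all other entries zero. -/
noncomputable def exTensor18 : Fin 2 → (Fin 3 → Fin 2) → ℝ := fun i f =>
  if i = 0 ∧ f = ![0, 0, 0] then 1
  else if i = 0 ∧ f = ![0, 0, 1] then -1
  else if i = 1 ∧ f = ![0, 0, 0] then 1
  else 0

theorem ColumnAdequate.of_sum_mul_tmul_nonpos {n k : ℕ} {A : Fin n → (Fin k → Fin n) → ℝ}
    (h : ∀ x, ∑ i, x i * tmul A x i ≤ 0 → ∀ i, tmul A x i = 0) : ColumnAdequate A :=
  fun x hx => h x (Finset.sum_nonpos fun i _ => hx i)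

theorem tmul_exTensor18_zero (x : Fin 2 → ℝ) : tmul exTensor18 x 0 = x 0 ^ 2 * (x 0 - x 1) := by
  have row : exTensor18 0 = fun f => (if f = ![0, 0, 0] then 1 else 0) -
      (if f = ![0, 0, 1] then 1 else 0) := by
    funext f
    unfold exTensor18
    split_ifs <;> simp_all
  simp only [tmul, row, sub_mul, ite_mul, one_mul, zero_mul, sum_sub_distrib, sum_ite_eq',
    mem_univ, if_true, Fin.prod_univ_three, Matrix.cons_val]
  ring

theorem tmul_exTensor18_one (x : Fin 2 → ℝ) : tmul exTensor18 x 1 = x 0 ^ 3 := by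
  have row : exTensor18 1 = fun f => if f = ![0, 0, 0] then 1 else 0 := by
    funext f
    simp [exTensor18]
  simp only [tmul, row, ite_mul, one_mul, zero_mul, sum_ite_eq', mem_univ, if_true,
    Fin.prod_univ_three, Matrix.cons_val]
  ring

theorem sum_mul_tmul_exTensor18 (x : Fin 2 → ℝ) :
    ∑ i, x i * tmul exTensor18 x i = x 0 ^ 4 := by
  rw [Fin.sum_univ_two, tmul_exTensor18_zero, tmul_exTensor18_one]
  ring

/-- This tensor satisfies `A x^4 = x_1^4 ≥ 0` (so it is PSD) and is column adequate. -/
theorem exTensor18_PSD_and_column_adequate :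
    (∀ x : Fin 2 → ℝ, ∑ i, x i * tmul exTensor18 x i = (x 0) ^ 4) ∧
    (∀ x : Fin 2 → ℝ, 0 ≤ ∑ i, x i * tmul exTensor18 x i) ∧
    ColumnAdequate exTensor18 := by
  refine ⟨sum_mul_tmul_exTensor18, fun x => sum_mul_tmul_exTensor18 x ▸ by positivity, ?_⟩
  refine ColumnAdequate.of_sum_mul_tmul_nonpos fun x hx => ?_
  have hx0 : x 0 = 0 := by
    rw [sum_mul_tmul_exTensor18] at hx
    exact pow_eq_zero_iff four_ne_zero |>.mp (le_antisymm hx (by positivity))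
  intro i
  fin_cases i <;> simp [tmul_exTensor18_zero, tmul_exTensor18_one, hx0]
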